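/- Let k be a field of characteristic zero, R = k[[x_1,...,x_d]], I an ideal of R, and c a positive integer. For every q with 1 ≤ q ≤ c, I ⊆ M^c if and only if Δ^{(c-q)}(I) ⊆ M^q, where M is the maximal ideal of R. (Equivalently, Sing(J,c) = Sing(Δ^{(c-q)}(J), q) for pairs.) -/

import Mathlib

set_option synthInstance.maxHeartbeats 1000000
set_option maxHeartbeats 1000000

/-- The partial derivative `∂/∂xᵢ` on `k[[x₁,…,x_d]]`. -/
noncomputable def pderivPS {k : Type} [CommRing k] {d : ℕ} (i : Fin d)
    (f : MvPowerSeries (Fin d) k) : MvPowerSeries (Fin d) k :=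
  fun s => ((s i + 1 : ℕ) : k) * MvPowerSeries.coeff (s + Finsupp.single i 1) f

/-- One application of the operator `Δ`. -/
noncomputable def DeltaStep {k : Type} [CommRing k] {d : ℕ}
    (I : Ideal (MvPowerSeries (Fin d) k)) : Ideal (MvPowerSeries (Fin d) k) :=
  I ⊔ Ideal.span {g | ∃ f ∈ I, ∃ i : Fin d, g = pderivPS i f}

/-- `Δ^{(j)}(I)`. -/
noncomputable def Delta {k : Type} [CommRing k] {d : ℕ} (j : ℕ)
    (I : Ideal (MvPowerSeries (Fin d) k)) : Ideal (MvPowerSeries (Fin d) k) :=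
  (DeltaStep (k := k) (d := d))^[j] I

/-!
Identify `Mⁿ` with the ideal of power series of order at least `n`: orders add under
multiplication, and a series of order `≥ n + 1` is `∑ Xᵢ gᵢ` with every `gᵢ` of order `≥ n`.
A partial derivative lowers the order by at most one, so `Δ` maps `Mⁿ⁺¹` into `Mⁿ`. Conversely,
in characteristic zero `∂/∂xᵢ` sends a monomial `xˢ` with `sᵢ ≠ 0` to a nonzero multiple of
`xˢ⁻ᵉⁱ`, so if `f` and all `∂f/∂xᵢ` have order `≥ n ≥ 1`, then `f` has order `≥ n + 1`.
Iterating, `Δ^{(j)}(I) ⊆ Mⁿ ↔ I ⊆ Mⁿ⁺ʲ` for `n ≥ 1`.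
-/

open MvPowerSeries Finsupp

namespace MvPowerSeries

variable {σ R : Type*} [CommSemiring R]

def orderIdeal (σ R : Type*) [CommSemiring R] (n : ℕ) : Ideal (MvPowerSeries σ R) where
  carrier := {f | n ≤ f.order}
  zero_mem' := by simp [order_zero]
  add_mem' hf hg := (le_min hf hg).trans min_order_le_add
  smul_mem' _ _ hf := hf.trans <| le_add_self.trans le_order_mul

theorem mem_orderIdeal {n : ℕ} {f : MvPowerSeries σ R} :
    f ∈ orderIdeal σ R n ↔ ∀ s : σ →₀ ℕ, s.degree < n → coeff s f = 0 :=
  ⟨fun hf _ hs => coeff_of_lt_order ((Nat.cast_lt.mpr hs).trans_le hf),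
    fun h => le_order fun s hs => h s (Nat.cast_lt.mp hs)⟩

theorem orderIdeal_antitone : Antitone (orderIdeal σ R) :=
  fun _ _ h f hf => show _ ≤ f.order from (Nat.cast_le.mpr h).trans hf

theorem orderIdeal_mul_le (m n : ℕ) :
    orderIdeal σ R m * orderIdeal σ R n ≤ orderIdeal σ R (m + n) :=
  Ideal.mul_le.mpr fun f hf g hg => show ((m + n : ℕ) : ℕ∞) ≤ (f * g).order by
    push_cast
    exact (add_le_add hf hg).trans le_order_mul

theorem orderIdeal_one_pow_le (n : ℕ) : orderIdeal σ R 1 ^ n ≤ orderIdeal σ R n := by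
  induction n with
  | zero => simp [orderIdeal]
  | succ n ih =>
    rw [pow_succ]
    exact (Ideal.mul_mono_left ih).trans (orderIdeal_mul_le n 1)

theorem X_mem_orderIdeal_one (i : σ) : X i ∈ orderIdeal σ R 1 :=
  one_le_order_iff_constCoeff_eq_zero.mpr (constantCoeff_X i)

theorem exists_eq_sum_X_mul [Fintype σ] {n : ℕ} {f : MvPowerSeries σ R}
    (hf : f ∈ orderIdeal σ R (n + 1)) :
    ∃ g : σ → MvPowerSeries σ R, (∀ i, g i ∈ orderIdeal σ R n) ∧ f = ∑ i, X i * g i := by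
  classical
  let : LinearOrder σ := LinearOrder.lift' _ (Fintype.equivFin σ).injective
  rw [mem_orderIdeal] at hf
  -- the monomial `s ≠ 0` of `f` goes to `X i * g i` for the least variable `i` occurring in `s`
  set g : σ → MvPowerSeries σ R := fun i t =>
    if (t + single i 1).support.min = (i : WithTop σ) then coeff (t + single i 1) f else 0
  have hg : ∀ i t, coeff t (g i) =
      if (t + single i 1).support.min = (i : WithTop σ) then coeff (t + single i 1) f else 0 :=
    fun _ _ => rfl
  refine ⟨g, fun i => mem_orderIdeal.mpr fun t ht => ?_, ?_⟩
  · rw [hg]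
    split_ifs
    · exact hf _ (by simpa using ht)
    · rfl
  ext s
  have hterm : ∀ i, coeff s (X i * g i) =
      if single i 1 ≤ s ∧ s.support.min = (i : WithTop σ) then coeff s f else 0 := by
    intro i
    rw [X_def, coeff_monomial_mul, one_mul]
    by_cases hi : single i 1 ≤ s
    · rw [hg, tsub_add_cancel_of_le hi]
      simp [hi]
    · simp [hi]
  simp_rw [map_sum, hterm]
  rcases eq_or_ne s 0 with rfl | hs
  · simp [hf 0 (by simp)]
  obtain ⟨j, hj⟩ := Finset.min_of_nonempty (support_nonempty_iff.mpr hs)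
  have hjs : single j 1 ≤ s := by
    simpa [single_le_iff, Nat.one_le_iff_ne_zero] using Finset.mem_of_min hj
  have hcond : ∀ i, (single i 1 ≤ s ∧ s.support.min = (i : WithTop σ)) ↔ j = i := fun i => by
    rw [hj, WithTop.coe_eq_coe]
    exact ⟨And.right, fun h => h ▸ ⟨hjs, rfl⟩⟩
  simp_rw [hcond, Finset.sum_ite_eq, Finset.mem_univ, if_true]

theorem orderIdeal_succ_le [Fintype σ] (n : ℕ) :
    orderIdeal σ R (n + 1) ≤ orderIdeal σ R 1 * orderIdeal σ R n := by
  intro f hf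
  obtain ⟨g, hg, rfl⟩ := exists_eq_sum_X_mul hf
  exact Ideal.sum_mem _ fun i _ => Ideal.mul_mem_mul (X_mem_orderIdeal_one i) (hg i)

theorem orderIdeal_eq_pow [Fintype σ] (n : ℕ) : orderIdeal σ R n = orderIdeal σ R 1 ^ n := by
  refine le_antisymm ?_ (orderIdeal_one_pow_le n)
  induction n with
  | zero => simp
  | succ n ih =>
    rw [pow_succ']
    exact (orderIdeal_succ_le n).trans (Ideal.mul_mono_right ih)

theorem maximalIdeal_eq_orderIdeal_one {k : Type*} [Field k] :
    IsLocalRing.maximalIdeal (MvPowerSeries σ k) = orderIdeal σ k 1 := by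
  ext f
  rw [IsLocalRing.mem_maximalIdeal, mem_nonunits_iff, isUnit_iff_constantCoeff,
    isUnit_iff_ne_zero, not_not]
  exact one_le_order_iff_constCoeff_eq_zero.symm

theorem maximalIdeal_pow_eq_orderIdeal {k : Type*} [Field k] [Fintype σ] (n : ℕ) :
    IsLocalRing.maximalIdeal (MvPowerSeries σ k) ^ n = orderIdeal σ k n := by
  rw [maximalIdeal_eq_orderIdeal_one, ← orderIdeal_eq_pow]

end MvPowerSeries

section Derivative

variable {k : Type} [CommRing k] {d : ℕ}

theorem coeff_pderivPS (i : Fin d) (f : MvPowerSeries (Fin d) k) (s : Fin d →₀ ℕ) :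
    coeff s (pderivPS i f) = ((s i + 1 : ℕ) : k) * coeff (s + single i 1) f :=
  rfl

theorem pderivPS_mem_orderIdeal {n : ℕ} {f : MvPowerSeries (Fin d) k}
    (hf : f ∈ orderIdeal (Fin d) k (n + 1)) (i : Fin d) : pderivPS i f ∈ orderIdeal (Fin d) k n :=
  mem_orderIdeal.mpr fun s hs => by
    rw [coeff_pderivPS, mem_orderIdeal.mp hf _ (by simpa using hs), mul_zero]

theorem mem_orderIdeal_succ_of_pderivPS_mem [IsAddTorsionFree k] {n : ℕ} (hn : n ≠ 0)
    {f : MvPowerSeries (Fin d) k} (hf : f ∈ orderIdeal (Fin d) k n)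
    (hdf : ∀ i, pderivPS i f ∈ orderIdeal (Fin d) k n) : f ∈ orderIdeal (Fin d) k (n + 1) := by
  refine mem_orderIdeal.mpr fun s hs => ?_
  rcases (Nat.lt_succ_iff.mp hs).lt_or_eq with hlt | hdeg
  · exact mem_orderIdeal.mp hf s hlt
  obtain ⟨i, hi⟩ : ∃ i, s i ≠ 0 := by
    by_contra! h
    exact hn (by simpa [show s = 0 from Finsupp.ext h] using hdeg.symm)
  have hle : single i 1 ≤ s := single_le_iff.mpr (Nat.one_le_iff_ne_zero.mpr hi)
  have hcoeff := mem_orderIdeal.mp (hdf i) (s - single i 1) (by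
    have := congrArg degree (tsub_add_cancel_of_le hle)
    rw [map_add, degree_single] at this
    omega)
  rw [coeff_pderivPS, tsub_add_cancel_of_le hle, ← nsmul_eq_mul, ← smul_zero (_ + 1)] at hcoeff
  exact IsAddTorsionFree.nsmul_right_injective (Nat.succ_ne_zero _) hcoeff

theorem DeltaStep_le_orderIdeal_iff [IsAddTorsionFree k] {n : ℕ} (hn : n ≠ 0)
    {I : Ideal (MvPowerSeries (Fin d) k)} :
    DeltaStep I ≤ orderIdeal (Fin d) k n ↔ I ≤ orderIdeal (Fin d) k (n + 1) := by
  rw [DeltaStep, sup_le_iff, Ideal.span_le]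
  constructor
  · rintro ⟨hI, hdI⟩ f hf
    exact mem_orderIdeal_succ_of_pderivPS_mem hn (hI hf) fun i => hdI ⟨f, hf, i, rfl⟩
  · intro hI
    refine ⟨hI.trans (orderIdeal_antitone n.le_succ), ?_⟩
    rintro _ ⟨f, hf, i, rfl⟩
    exact pderivPS_mem_orderIdeal (hI hf) i

theorem Delta_le_orderIdeal_iff [IsAddTorsionFree k] {n : ℕ} (hn : n ≠ 0) (j : ℕ)
    {I : Ideal (MvPowerSeries (Fin d) k)} :
    Delta j I ≤ orderIdeal (Fin d) k n ↔ I ≤ orderIdeal (Fin d) k (n + j) := by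
  induction j generalizing I with
  | zero => rfl
  | succ j ih =>
    rw [Delta, Function.iterate_succ_apply, ← Delta, ih, DeltaStep_le_orderIdeal_iff (by omega),
      add_assoc]

end Derivative

theorem mem_pow_iff_delta_le_pow_general {k : Type} [Field k] [CharZero k] {d : ℕ}
    (I : Ideal (MvPowerSeries (Fin d) k)) (c : ℕ) :
    ∀ q, 1 ≤ q → q ≤ c →
      (I ≤ (IsLocalRing.maximalIdeal (MvPowerSeries (Fin d) k)) ^ c ↔
        Delta (c - q) I ≤ (IsLocalRing.maximalIdeal (MvPowerSeries (Fin d) k)) ^ q) := by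
  intro q hq hqc
  obtain ⟨j, rfl⟩ := Nat.exists_eq_add_of_le hqc
  rw [maximalIdeal_pow_eq_orderIdeal, maximalIdeal_pow_eq_orderIdeal, Nat.add_sub_cancel_left,
    Delta_le_orderIdeal_iff (by omega)]

/-- For `R = k[[x₁,…,x_d]]`, `char k = 0`, maximal ideal `M`, ideal `I` and
`c ≥ 1`: for every `q` with `1 ≤ q ≤ c`, `I ⊆ M^c` iff `Δ^{(c-q)}(I) ⊆ M^q`
(i.e. `Sing(I,c) = Sing(Δ^{(c-q)}(I), q)`). -/
theorem mem_pow_iff_delta_le_pow {k : Type} [Field k] [CharZero k] {d : ℕ}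
    (I : Ideal (MvPowerSeries (Fin d) k)) (c : ℕ) (hc : 0 < c) :
    ∀ q, 1 ≤ q → q ≤ c →
      (I ≤ (IsLocalRing.maximalIdeal (MvPowerSeries (Fin d) k)) ^ c ↔
        Delta (c - q) I ≤ (IsLocalRing.maximalIdeal (MvPowerSeries (Fin d) k)) ^ q) :=
  mem_pow_iff_delta_le_pow_general I c
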